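/- arXiv:2101.10491 — 2 statements merged into one kernel-verified Lean document; each statement's English description precedes it below -/
import Mathlib

section
/- In a reverse differential restriction category, the derived forward derivative D satisfies D[f̄] = (f̄ × 1) π₁ for any map f. -/
open CategoryTheory

universe v u

/-- A restriction category: a category with a restriction operator `rst`
satisfying the four Cockett–Lack axioms R1–R4. -/
class RestrictionCat (C : Type u) [Category.{v} C] where
  rst : ∀ {A B : C}, (A ⟶ B) → (A ⟶ A)
  rst_comp : ∀ {A B : C} (f : A ⟶ B), rst f ≫ f = f
  rst_comm : ∀ {A B B' : C} (f : A ⟶ B) (g : A ⟶ B'), rst f ≫ rst g = rst g ≫ rst f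
  rst_rst : ∀ {A B B' : C} (f : A ⟶ B) (g : A ⟶ B'), rst (rst g ≫ f) = rst g ≫ rst f
  rst_slide : ∀ {A B D : C} (f : A ⟶ B) (g : B ⟶ D), f ≫ rst g = rst (f ≫ g) ≫ f

open RestrictionCat

/-- The canonical partial order on hom-sets: `f ≤ g` iff `rst f ≫ g = f`. -/
def rle {C : Type u} [Category.{v} C] [RestrictionCat C] {A B : C} (f g : A ⟶ B) : Prop :=
  rst f ≫ g = f

/-- A Cartesian left additive restriction category: a restriction category with
(lax) restriction products and a left additive structure on hom-sets. -/
class CLARC (C : Type u) [Category.{v} C] extends RestrictionCat C where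
  prod : C → C → C
  pair : ∀ {A B B' : C}, (A ⟶ B) → (A ⟶ B') → (A ⟶ prod B B')
  p0 : ∀ {B B' : C}, prod B B' ⟶ B
  p1 : ∀ {B B' : C}, prod B B' ⟶ B'
  pair_p0 : ∀ {A B B' : C} (f : A ⟶ B) (g : A ⟶ B'), pair f g ≫ p0 = rst g ≫ f
  pair_p1 : ∀ {A B B' : C} (f : A ⟶ B) (g : A ⟶ B'), pair f g ≫ p1 = rst f ≫ g
  pair_eta : ∀ {A B B' : C} (h : A ⟶ prod B B'), pair (h ≫ p0) (h ≫ p1) = h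
  comp_pair : ∀ {X A B B' : C} (x : X ⟶ A) (f : A ⟶ B) (g : A ⟶ B'),
    x ≫ pair f g = pair (x ≫ f) (x ≫ g)
  add : ∀ {A B : C}, (A ⟶ B) → (A ⟶ B) → (A ⟶ B)
  zero : ∀ {A B : C}, A ⟶ B
  add_assoc : ∀ {A B : C} (f g h : A ⟶ B), add (add f g) h = add f (add g h)
  add_comm : ∀ {A B : C} (f g : A ⟶ B), add f g = add g f
  add_zero : ∀ {A B : C} (f : A ⟶ B), add f zero = f
  comp_add : ∀ {X A B : C} (x : X ⟶ A) (f g : A ⟶ B),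
    x ≫ add f g = add (x ≫ f) (x ≫ g)
  zero_comp_le : ∀ {A B D : C} (f : B ⟶ D),
    rst ((zero : A ⟶ B) ≫ f) ≫ (zero : A ⟶ D) = (zero : A ⟶ B) ≫ f
  zero_total : ∀ {A B : C}, rst (zero : A ⟶ B) = 𝟙 A
  add_p0 : ∀ {A B B' : C} (f g : A ⟶ prod B B'),
    add f g ≫ p0 = add (f ≫ p0) (g ≫ p0)
  add_p1 : ∀ {A B B' : C} (f g : A ⟶ prod B B'),
    add f g ≫ p1 = add (f ≫ p1) (g ≫ p1)
  zero_p0 : ∀ {A B B' : C}, (zero : A ⟶ prod B B') ≫ p0 = (zero : A ⟶ B)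
  zero_p1 : ∀ {A B B' : C}, (zero : A ⟶ prod B B') ≫ p1 = (zero : A ⟶ B')

open CLARC

/-- A reverse differential restriction category: a Cartesian left additive
restriction category equipped with a reverse differential operator `Rd`
satisfying axioms RD.1–RD.9. -/
class RDRC (C : Type u) [Category.{v} C] extends CLARC C where
  Rd : ∀ {A B : C}, (A ⟶ B) → (prod A B ⟶ A)
  RD1a : ∀ {A B : C} (f g : A ⟶ B), Rd (add f g) = add (Rd f) (Rd g)
  RD1b : ∀ {A B : C}, Rd (zero : A ⟶ B) = zero
  RD2a : ∀ {X A B : C} (a : X ⟶ A) (b c : X ⟶ B) (f : A ⟶ B),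
    pair a (add b c) ≫ Rd f = add (pair a b ≫ Rd f) (pair a c ≫ Rd f)
  RD2b : ∀ {X A B : C} (a : X ⟶ A) (f : A ⟶ B),
    pair a (zero : X ⟶ B) ≫ Rd f = rst (a ≫ f) ≫ zero
  RD3a : ∀ {A B : C}, Rd (p0 : prod A B ⟶ A) = p1 ≫ pair (𝟙 A) (zero : A ⟶ B)
  RD3b : ∀ {A B : C}, Rd (p1 : prod A B ⟶ B) = p1 ≫ pair (zero : B ⟶ A) (𝟙 B)
  RD4 : ∀ {A B B' : C} (f : A ⟶ B) (g : A ⟶ B'),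
    Rd (pair f g) = add (pair p0 (p1 ≫ p0) ≫ Rd f) (pair p0 (p1 ≫ p1) ≫ Rd g)
  RD5 : ∀ {A B D : C} (f : A ⟶ B) (g : B ⟶ D),
    Rd (f ≫ g) = pair p0 (pair (p0 ≫ f) p1 ≫ Rd g) ≫ Rd f
  RD6 : ∀ {A B : C} (f : A ⟶ B),
    pair (pair p0 (p1 ≫ p0)) (pair (p0 ≫ (zero : A ⟶ A)) (p1 ≫ p1)) ≫
      pair (p0 ≫ pair (p0 ≫ pair (𝟙 A) (zero : A ⟶ B)) p1) p1 ≫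
      Rd (Rd (Rd f)) ≫ p1
    = pair p0 (p1 ≫ p1) ≫ Rd f
  RD7 : ∀ {A B : C} (f : A ⟶ B),
    pair (pair p0 (zero : prod (prod A A) (prod A A) ⟶ B)) p1 ≫
      Rd (Rd (pair (pair p0 (zero : prod A A ⟶ B)) p1 ≫ Rd (Rd f) ≫ p1)) ≫ p1
    = pair (pair (p0 ≫ p0) (p1 ≫ p0)) (pair (p0 ≫ p1) (p1 ≫ p1)) ≫
      pair (pair p0 (zero : prod (prod A A) (prod A A) ⟶ B)) p1 ≫
      Rd (Rd (pair (pair p0 (zero : prod A A ⟶ B)) p1 ≫ Rd (Rd f) ≫ p1)) ≫ p1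
  RD8 : ∀ {A B : C} (f : A ⟶ B), rst (Rd f) = pair (p0 ≫ rst f) p1
  RD9 : ∀ {A B : C} (f : A ⟶ B), Rd (rst f) = pair (p0 ≫ rst f) p1 ≫ p1

open RDRC

variable {C : Type u} [Category.{v} C]

/-- The forward derivative derived from the reverse derivative:
`D[f] := ⟨⟨π₀, 0⟩, π₁⟩ ≫ R[R[f]] ≫ π₁`. -/
def Dop [RDRC C] {A B : C} (f : A ⟶ B) : prod A A ⟶ B :=
  pair (pair p0 (zero : prod A A ⟶ B)) p1 ≫ Rd (Rd f) ≫ p1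

section Helpers

variable [CLARC C] {A B B' : C}

lemma rst_id' : rst (𝟙 A) = 𝟙 A := by
  have h := rst_comp (𝟙 A); simpa using h

lemma rst_idem' (f : A ⟶ B) : rst f ≫ rst f = rst f := by
  have h := rst_rst f f
  rw [rst_comp] at h
  exact h.symm

lemma rst_rst_self' (f : A ⟶ B) : rst (rst f) = rst f := by
  have h := rst_rst (𝟙 A) f
  simpa [rst_id'] using h

lemma rst_comp_left (f : A ⟶ B) (g : B ⟶ B') : rst (f ≫ g) ≫ rst f = rst (f ≫ g) := by
  have h1 : rst (f ≫ g) = rst f ≫ rst (f ≫ g) := by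
    conv_lhs => rw [show f ≫ g = rst f ≫ (f ≫ g) by rw [← Category.assoc, rst_comp]]
    rw [rst_rst]
  conv_lhs => rw [h1]
  rw [Category.assoc, rst_comm, ← Category.assoc, rst_idem', ← h1]

lemma rst_comp_rst' (f : A ⟶ B) (g : B ⟶ B') : rst (f ≫ rst g) = rst (f ≫ g) := by
  rw [rst_slide, rst_rst, rst_comp_left]

lemma rst_comp_zero (f : A ⟶ B) : rst (f ≫ (zero : B ⟶ B')) = rst f := by
  rw [← rst_comp_rst' f (zero : B ⟶ B'), zero_total, Category.comp_id]

lemma pair_ext (h k : A ⟶ prod B B') (h0 : h ≫ p0 = k ≫ p0) (h1 : h ≫ p1 = k ≫ p1) :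
    h = k := by
  rw [← pair_eta h, h0, h1, pair_eta]

lemma rst_pair' (f : A ⟶ B) (g : A ⟶ B') : rst (pair f g) = rst f ≫ rst g := by
  have h1 : rst f ≫ rst g ≫ pair f g = pair f g := by
    rw [comp_pair, comp_pair]
    have e1 : rst f ≫ rst g ≫ f = rst g ≫ f := by
      rw [← Category.assoc, rst_comm, Category.assoc, rst_comp]
    have e2 : rst f ≫ rst g ≫ g = rst f ≫ g := by rw [rst_comp]
    rw [e1, e2, ← pair_p0 f g, ← pair_p1 f g, pair_eta]
  have h2 : rst (pair f g) = rst f ≫ rst g ≫ rst (pair f g) := by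
    conv_lhs => rw [← h1]
    rw [rst_rst, rst_rst]
  have h3 : rst f ≫ rst g = rst (pair f g ≫ p1) := by rw [pair_p1, rst_rst]
  have h4 : (rst f ≫ rst g) ≫ rst (pair f g) = rst f ≫ rst g := by
    rw [h3, rst_comp_left]
  rw [h2, ← Category.assoc, h4]

lemma pair_proj_id : pair (p0 : prod B B' ⟶ B) p1 = 𝟙 (prod B B') := by
  have h := pair_eta (𝟙 (prod B B'))
  simpa using h

lemma rst_p0' : rst (p0 : prod B B' ⟶ B) = 𝟙 (prod B B') := by
  have h : rst (p0 : prod B B' ⟶ B) ≫ rst (p1 : prod B B' ⟶ B') = 𝟙 (prod B B') := by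
    rw [← rst_pair', pair_proj_id, rst_id']
  calc rst (p0 : prod B B' ⟶ B)
      = rst (p0 : prod B B' ⟶ B) ≫ rst (p0 : prod B B' ⟶ B) ≫ rst (p1 : prod B B' ⟶ B') := by
        rw [h, Category.comp_id]
    _ = (rst (p0 : prod B B' ⟶ B) ≫ rst (p0 : prod B B' ⟶ B)) ≫ rst (p1 : prod B B' ⟶ B') := by
        rw [Category.assoc]
    _ = 𝟙 (prod B B') := by rw [rst_idem', h]

lemma rst_p1' : rst (p1 : prod B B' ⟶ B') = 𝟙 (prod B B') := by
  have h : rst (p0 : prod B B' ⟶ B) ≫ rst (p1 : prod B B' ⟶ B') = 𝟙 (prod B B') := by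
    rw [← rst_pair', pair_proj_id, rst_id']
  calc rst (p1 : prod B B' ⟶ B')
      = (rst (p0 : prod B B' ⟶ B) ≫ rst (p1 : prod B B' ⟶ B')) ≫ rst (p1 : prod B B' ⟶ B') := by
        rw [h, Category.id_comp]
    _ = rst (p0 : prod B B' ⟶ B) ≫ rst (p1 : prod B B' ⟶ B') ≫ rst (p1 : prod B B' ⟶ B') := by
        rw [Category.assoc]
    _ = 𝟙 (prod B B') := by rw [rst_idem', h]

/-- `⟨π₀ ≫ f̄, π₁⟩` equals the restriction idempotent of `π₀ ≫ f`. -/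
lemma pair_rst_proj (f : A ⟶ B) :
    pair ((p0 : prod A B ⟶ A) ≫ rst f) (p1 : prod A B ⟶ B) = rst ((p0 : prod A B ⟶ A) ≫ f) := by
  apply pair_ext
  · rw [pair_p0, rst_p1', Category.id_comp, rst_slide]
  · rw [pair_p1, rst_comp_rst']

end Helpers

/-- In a reverse differential restriction category, the derived
forward derivative satisfies `D[rst f] = (rst f × 1) ≫ π₁`. -/
theorem Dop_rst {A B : C} [RDRC C] (f : A ⟶ B) :
    Dop (rst f) = pair (p0 ≫ rst f) p1 ≫ p1 := by
  have hr : pair ((p0 : prod A A ⟶ A) ≫ rst f) (p1 : prod A A ⟶ A)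
      = rst ((p0 : prod A A ⟶ A) ≫ f) := by
    have h := pair_rst_proj (rst f)
    rwa [rst_rst_self', rst_comp_rst'] at h
  have h1 : Rd (rst f) = rst ((p0 : prod A A ⟶ A) ≫ f) ≫ p1 := by rw [RD9, hr]
  have hRdr : Rd (rst ((p0 : prod A A ⟶ A) ≫ f)) =
      rst ((p0 : prod (prod A A) (prod A A) ⟶ prod A A) ≫ rst ((p0 : prod A A ⟶ A) ≫ f)) ≫ p1 := by
    rw [RD9]
    have h2 := pair_rst_proj (rst ((p0 : prod A A ⟶ A) ≫ f))
    rw [rst_rst_self'] at h2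
    rw [h2]
  simp only [Dop]
  rw [h1, RD5, RD3b, hRdr, hr]
  set r := rst ((p0 : prod A A ⟶ A) ≫ f) with hrdef
  have hr_idem : r ≫ r = r := by rw [hrdef]; exact rst_idem' _
  have hr_rst : rst r = r := by rw [hrdef]; exact rst_rst_self' _
  have hr_absorb : ∀ {Y : C} (x : Y ⟶ prod A A),
      rst (x ≫ r) = rst (x ≫ ((p0 : prod A A ⟶ A) ≫ f)) := by
    intro Y x; rw [hrdef, rst_comp_rst']
  have hu0 : pair (pair (p0 : prod A A ⟶ A) (zero : prod A A ⟶ A)) (p1 : prod A A ⟶ A) ≫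
      (p0 : prod (prod A A) A ⟶ prod A A) = pair p0 zero := by
    rw [pair_p0, rst_p1', Category.id_comp]
  have hz : rst (pair (p0 : prod A A ⟶ A) (zero : prod A A ⟶ A)) = 𝟙 (prod A A) := by
    rw [rst_pair', rst_p0', zero_total, Category.comp_id]
  have hu1 : pair (pair (p0 : prod A A ⟶ A) (zero : prod A A ⟶ A)) (p1 : prod A A ⟶ A) ≫
      (p1 : prod (prod A A) A ⟶ A) = p1 := by
    rw [pair_p1, hz, Category.id_comp]
  have hpz0 : pair (p0 : prod A A ⟶ A) (zero : prod A A ⟶ A) ≫ (p0 : prod A A ⟶ A) = p0 := by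
    rw [pair_p0, zero_total, Category.id_comp]
  have hz2 : rst (pair (zero : A ⟶ A) (𝟙 A)) = 𝟙 A := by
    rw [rst_pair', zero_total, rst_id', Category.comp_id]
  have hkA : rst (pair (p0 : prod A A ⟶ A) (zero : prod A A ⟶ A) ≫ r) = r := by
    rw [hr_absorb, ← Category.assoc, hpz0, ← hrdef]
  have hb : rst ((r ≫ (p1 : prod A A ⟶ A)) ≫ pair (zero : A ⟶ A) (𝟙 A)) = r := by
    rw [← rst_comp_rst' (r ≫ p1) (pair (zero : A ⟶ A) (𝟙 A)), hz2, Category.comp_id,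
      ← rst_comp_rst' r (p1 : prod A A ⟶ A), rst_p1', Category.comp_id, hr_rst]
  have hut : pair (pair (p0 : prod A A ⟶ A) (zero : prod A A ⟶ A)) (p1 : prod A A ⟶ A) ≫
      (pair ((p0 : prod (prod A A) A ⟶ prod A A) ≫ r) (p1 : prod (prod A A) A ⟶ A) ≫
        ((p1 : prod (prod A A) A ⟶ A) ≫ pair (zero : A ⟶ A) (𝟙 A)))
      = (r ≫ p1) ≫ pair (zero : A ⟶ A) (𝟙 A) := by
    rw [← Category.assoc, ← Category.assoc,
      comp_pair (pair (pair (p0 : prod A A ⟶ A) (zero : prod A A ⟶ A)) (p1 : prod A A ⟶ A)),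
      ← Category.assoc, hu0, hu1, pair_p1, hkA]
  have hw : pair (pair (p0 : prod A A ⟶ A) (zero : prod A A ⟶ A)) (p1 : prod A A ⟶ A) ≫
      pair (p0 : prod (prod A A) A ⟶ prod A A)
        (pair ((p0 : prod (prod A A) A ⟶ prod A A) ≫ r) (p1 : prod (prod A A) A ⟶ A) ≫
          ((p1 : prod (prod A A) A ⟶ A) ≫ pair (zero : A ⟶ A) (𝟙 A)))
      = pair (pair p0 zero) ((r ≫ p1) ≫ pair (zero : A ⟶ A) (𝟙 A)) := by
    rw [comp_pair, hu0, hut]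
  have hwp0 : pair (pair (p0 : prod A A ⟶ A) (zero : prod A A ⟶ A))
        ((r ≫ (p1 : prod A A ⟶ A)) ≫ pair (zero : A ⟶ A) (𝟙 A)) ≫
      (p0 : prod (prod A A) (prod A A) ⟶ prod A A) = r ≫ pair p0 zero := by
    rw [pair_p0, hb]
  have h3 : rst (pair (pair (p0 : prod A A ⟶ A) (zero : prod A A ⟶ A))
        ((r ≫ (p1 : prod A A ⟶ A)) ≫ pair (zero : A ⟶ A) (𝟙 A)) ≫
      ((p0 : prod (prod A A) (prod A A) ⟶ prod A A) ≫ r)) = r := by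
    rw [← Category.assoc, hwp0]
    rw [hr_absorb]
    simp only [Category.assoc]
    rw [← Category.assoc (pair (p0 : prod A A ⟶ A) (zero : prod A A ⟶ A)) (p0 : prod A A ⟶ A) f,
      hpz0, ← hr_absorb r, hr_idem, hr_rst]
  have hws : pair (pair (p0 : prod A A ⟶ A) (zero : prod A A ⟶ A))
        ((r ≫ (p1 : prod A A ⟶ A)) ≫ pair (zero : A ⟶ A) (𝟙 A)) ≫
      rst ((p0 : prod (prod A A) (prod A A) ⟶ prod A A) ≫ r)
      = r ≫ pair (pair p0 zero) ((r ≫ p1) ≫ pair (zero : A ⟶ A) (𝟙 A)) := by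
    rw [rst_slide, h3]
  have hwp1 : pair (pair (p0 : prod A A ⟶ A) (zero : prod A A ⟶ A))
        ((r ≫ (p1 : prod A A ⟶ A)) ≫ pair (zero : A ⟶ A) (𝟙 A)) ≫
      (p1 : prod (prod A A) (prod A A) ⟶ prod A A)
      = (r ≫ p1) ≫ pair (zero : A ⟶ A) (𝟙 A) := by
    rw [pair_p1, hz, Category.id_comp]
  have hz3 : pair (zero : A ⟶ A) (𝟙 A) ≫ (p1 : prod A A ⟶ A) = 𝟙 A := by
    rw [pair_p1, zero_total, Category.id_comp]
  simp only [Category.assoc]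
  rw [← Category.assoc (pair (pair (p0 : prod A A ⟶ A) (zero : prod A A ⟶ A)) (p1 : prod A A ⟶ A))
      (pair (p0 : prod (prod A A) A ⟶ prod A A)
        (pair ((p0 : prod (prod A A) A ⟶ prod A A) ≫ r) (p1 : prod (prod A A) A ⟶ A) ≫
          ((p1 : prod (prod A A) A ⟶ A) ≫ pair (zero : A ⟶ A) (𝟙 A))))]
  rw [hw]
  rw [← Category.assoc (g := rst ((p0 : prod (prod A A) (prod A A) ⟶ prod A A) ≫ r))]
  rw [hws]
  rw [Category.assoc]
  rw [← Category.assoc (g := (p1 : prod (prod A A) (prod A A) ⟶ prod A A))]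
  rw [hwp1]
  simp only [Category.assoc]
  rw [hz3, Category.comp_id, ← Category.assoc, hr_idem]
end

section
/- In a Cartesian left additive join restriction category, the addition map + : Hom(A,B) × Hom(A,B) → Hom(A,B) is monotone and preserves joins in each argument: if f ≤ f' and g ≤ g' then f + g ≤ f' + g', and (⋁_i f_i) + (⋁_j g_j) = ⋁_{i,j} (f_i + g_j). -/
open CategoryTheory

universe v u

open RestrictionCat

open CLARC

/-- Pairwise compatibility of a family of parallel maps. -/
def Compat {C : Type u} [Category.{v} C] [RestrictionCat C] {A B : C}
    (S : Set (A ⟶ B)) : Prop :=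
  ∀ f ∈ S, ∀ g ∈ S, rst f ≫ g = rst g ≫ f

/-- A Cartesian left additive join restriction category. -/
class JoinCLARC (C : Type u) [Category.{v} C] extends CLARC C where
  join : ∀ {A B : C}, Set (A ⟶ B) → (A ⟶ B)
  join_le : ∀ {A B : C} (S : Set (A ⟶ B)),
    (∀ f ∈ S, ∀ g ∈ S, rst f ≫ g = rst g ≫ f) →
    ∀ f ∈ S, rst f ≫ join S = f
  join_min : ∀ {A B : C} (S : Set (A ⟶ B)) (g : A ⟶ B),
    (∀ f ∈ S, ∀ g ∈ S, rst f ≫ g = rst g ≫ f) →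
    (∀ f ∈ S, rst f ≫ g = f) → rst (join S) ≫ g = join S
  comp_join : ∀ {X A B : C} (x : X ⟶ A) (S : Set (A ⟶ B)),
    (∀ f ∈ S, ∀ g ∈ S, rst f ≫ g = rst g ≫ f) →
    x ≫ join S = join ((x ≫ ·) '' S)
  join_comp : ∀ {A B Y : C} (S : Set (A ⟶ B)) (y : B ⟶ Y),
    (∀ f ∈ S, ∀ g ∈ S, rst f ≫ g = rst g ≫ f) →
    join S ≫ y = join ((· ≫ y) '' S)

open JoinCLARC

section AuxBasic

variable {C : Type u} [Category.{v} C] [JoinCLARC C]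

lemma jcl_rst_one (A : C) : rst (𝟙 A) = 𝟙 A := by
  have h := rst_comp (𝟙 A)
  rwa [Category.comp_id] at h

lemma jcl_rst_rst_self {A B : C} (f : A ⟶ B) : rst (rst f) = rst f := by
  have h : rst (rst f ≫ 𝟙 A) = rst f ≫ rst (𝟙 A) := rst_rst (𝟙 A) f
  rwa [Category.comp_id, jcl_rst_one, Category.comp_id] at h

lemma jcl_idem {A B : C} (f : A ⟶ B) : rst f ≫ rst f = rst f := by
  have h := rst_rst f f
  rw [rst_comp] at h
  exact h.symm

lemma jcl_rst_comp_rst {A B D : C} (x : A ⟶ B) (y : B ⟶ D) :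
    rst (x ≫ rst y) = rst (x ≫ y) ≫ rst x := by
  rw [rst_slide x y]
  exact rst_rst x (x ≫ y)

lemma jcl_rst_le_rst_left {A B D : C} (x : A ⟶ B) (y : B ⟶ D) :
    rst (x ≫ y) ≫ rst x = rst (x ≫ y) := by
  have h2 : rst (x ≫ rst y) ≫ (x ≫ y) = x ≫ y := by
    rw [jcl_rst_comp_rst, Category.assoc, ← Category.assoc (rst x) x y, rst_comp]
    exact rst_comp (x ≫ y)
  have h3 : rst (x ≫ y) = rst (x ≫ rst y) ≫ rst (x ≫ y) := by
    conv_lhs => rw [← h2]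
    exact rst_rst (x ≫ y) (x ≫ rst y)
  have h4 : rst (x ≫ y) = rst (x ≫ y) ≫ rst x := by
    calc rst (x ≫ y) = rst (x ≫ rst y) ≫ rst (x ≫ y) := h3
      _ = (rst (x ≫ y) ≫ rst x) ≫ rst (x ≫ y) := by rw [jcl_rst_comp_rst]
      _ = rst (x ≫ y) ≫ (rst x ≫ rst (x ≫ y)) := by rw [Category.assoc]
      _ = rst (x ≫ y) ≫ (rst (x ≫ y) ≫ rst x) := by rw [rst_comm]
      _ = (rst (x ≫ y) ≫ rst (x ≫ y)) ≫ rst x := by rw [Category.assoc]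
      _ = rst (x ≫ y) ≫ rst x := by rw [jcl_idem]
  exact h4.symm

lemma jcl_rst_comp_rst' {A B D : C} (x : A ⟶ B) (y : B ⟶ D) :
    rst (x ≫ rst y) = rst (x ≫ y) := by
  rw [jcl_rst_comp_rst, jcl_rst_le_rst_left]

lemma jcl_rle_refl {A B : C} (f : A ⟶ B) : rle f f := rst_comp f

lemma jcl_rle_rst {A B : C} {f g : A ⟶ B} (h : rle f g) :
    rst f ≫ rst g = rst f := by
  have h2 := rst_rst g f
  rw [h] at h2
  exact h2.symm

lemma jcl_rle_antisymm {A B : C} {f g : A ⟶ B} (h1 : rle f g) (h2 : rle g f) :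
    f = g := by
  have e1 := jcl_rle_rst h1
  have e2 := jcl_rle_rst h2
  have e3 : rst f = rst g := by
    rw [← e1, rst_comm, e2]
  have h1' : rst f ≫ g = f := h1
  rw [e3, rst_comp] at h1'
  exact h1'.symm

end AuxBasic
section AuxPair

variable {C : Type u} [Category.{v} C] [JoinCLARC C]

lemma jcl_swap {A B B' D : C} (x : A ⟶ B) (y : A ⟶ B') (h : A ⟶ D) :
    rst x ≫ rst y ≫ h = rst y ≫ rst x ≫ h := by
  rw [← Category.assoc, rst_comm, Category.assoc]

lemma jcl_dup {A B D : C} (x : A ⟶ B) (h : A ⟶ D) :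
    rst x ≫ rst x ≫ h = rst x ≫ h := by
  rw [← Category.assoc, jcl_idem]

lemma jcl_pair_mix {A B B' : C} (f : A ⟶ B) (g : A ⟶ B') :
    pair f g = pair (rst g ≫ f) (rst f ≫ g) := by
  have h := pair_eta (pair f g)
  rw [pair_p0, pair_p1] at h
  exact h.symm

lemma jcl_pair_absorb_l {A B B' : C} (f : A ⟶ B) (g : A ⟶ B') :
    rst f ≫ pair f g = pair f g := by
  rw [comp_pair, rst_comp]
  calc pair f (rst f ≫ g)
      = pair (rst (rst f ≫ g) ≫ f) (rst f ≫ (rst f ≫ g)) := jcl_pair_mix _ _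
    _ = pair (rst g ≫ f) (rst f ≫ g) := by
        rw [rst_rst, jcl_dup, rst_comm, Category.assoc, rst_comp]
    _ = pair f g := (jcl_pair_mix f g).symm

lemma jcl_pair_absorb_r {A B B' : C} (f : A ⟶ B) (g : A ⟶ B') :
    rst g ≫ pair f g = pair f g := by
  rw [comp_pair, rst_comp]
  calc pair (rst g ≫ f) g
      = pair (rst g ≫ (rst g ≫ f)) (rst (rst g ≫ f) ≫ g) := jcl_pair_mix _ _
    _ = pair (rst g ≫ f) (rst f ≫ g) := by
        rw [rst_rst, jcl_dup, rst_comm, Category.assoc, rst_comp]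
    _ = pair f g := (jcl_pair_mix f g).symm

lemma jcl_rst_pair {A B B' : C} (f : A ⟶ B) (g : A ⟶ B') :
    rst (pair f g) = rst f ≫ rst g := by
  have pf : rst (pair f g) = rst f ≫ rst (pair f g) := by
    conv_lhs => rw [← jcl_pair_absorb_l f g]
    exact rst_rst (pair f g) f
  have pg : rst (pair f g) = rst g ≫ rst (pair f g) := by
    conv_lhs => rw [← jcl_pair_absorb_r f g]
    exact rst_rst (pair f g) g
  have hge : (rst f ≫ rst g) ≫ rst (pair f g) = rst f ≫ rst g := by
    have h1 := jcl_rst_le_rst_left (pair f g) (p1 : prod B B' ⟶ B')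
    rw [pair_p1, rst_rst] at h1
    exact h1
  calc rst (pair f g) = rst f ≫ rst (pair f g) := pf
    _ = rst f ≫ (rst g ≫ rst (pair f g)) := by rw [← pg]
    _ = (rst f ≫ rst g) ≫ rst (pair f g) := by rw [Category.assoc]
    _ = rst f ≫ rst g := hge

lemma jcl_pair_proj_id (B B' : C) : pair (p0 : prod B B' ⟶ B) p1 = 𝟙 (prod B B') := by
  have h := pair_eta (𝟙 (prod B B'))
  rwa [Category.id_comp, Category.id_comp] at h

lemma jcl_p0_total (B B' : C) : rst (p0 : prod B B' ⟶ B) = 𝟙 (prod B B') := by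
  have h1 : rst (p0 : prod B B' ⟶ B) ≫ rst (p1 : prod B B' ⟶ B') = 𝟙 (prod B B') := by
    rw [← jcl_rst_pair, jcl_pair_proj_id, jcl_rst_one]
  calc rst (p0 : prod B B' ⟶ B)
      = rst (p0 : prod B B' ⟶ B) ≫ (rst (p0 : prod B B' ⟶ B) ≫ rst (p1 : prod B B' ⟶ B')) := by
        rw [h1, Category.comp_id]
    _ = (rst (p0 : prod B B' ⟶ B) ≫ rst (p0 : prod B B' ⟶ B)) ≫ rst (p1 : prod B B' ⟶ B') := by
        rw [Category.assoc]
    _ = rst (p0 : prod B B' ⟶ B) ≫ rst (p1 : prod B B' ⟶ B') := by rw [jcl_idem]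
    _ = 𝟙 (prod B B') := h1

lemma jcl_p1_total (B B' : C) : rst (p1 : prod B B' ⟶ B') = 𝟙 (prod B B') := by
  have h1 : rst (p0 : prod B B' ⟶ B) ≫ rst (p1 : prod B B' ⟶ B') = 𝟙 (prod B B') := by
    rw [← jcl_rst_pair, jcl_pair_proj_id, jcl_rst_one]
  calc rst (p1 : prod B B' ⟶ B')
      = rst (p1 : prod B B' ⟶ B') ≫ (rst (p0 : prod B B' ⟶ B) ≫ rst (p1 : prod B B' ⟶ B')) := by
        rw [h1, Category.comp_id]
    _ = rst (p0 : prod B B' ⟶ B) ≫ (rst (p1 : prod B B' ⟶ B') ≫ rst (p1 : prod B B' ⟶ B')) := by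
        rw [jcl_swap]
    _ = rst (p0 : prod B B' ⟶ B) ≫ rst (p1 : prod B B' ⟶ B') := by rw [jcl_idem]
    _ = 𝟙 (prod B B') := h1

lemma jcl_rst_comp_p0 {A B B' : C} (x : A ⟶ prod B B') :
    rst (x ≫ (p0 : prod B B' ⟶ B)) = rst x := by
  rw [← jcl_rst_comp_rst', jcl_p0_total, Category.comp_id]

lemma jcl_rst_comp_p1 {A B B' : C} (x : A ⟶ prod B B') :
    rst (x ≫ (p1 : prod B B' ⟶ B')) = rst x := by
  rw [← jcl_rst_comp_rst', jcl_p1_total, Category.comp_id]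

end AuxPair
section AuxAdd

variable {C : Type u} [Category.{v} C] [JoinCLARC C]

lemma jcl_rst_add_rst {A B : C} (f g : A ⟶ B) :
    rst (add f g) = rst (add (rst f) (rst g)) := by
  have h0 : add (pair f (𝟙 A)) (pair g (𝟙 A)) ≫ p0 = add f g := by
    rw [CLARC.add_p0, pair_p0, pair_p0, jcl_rst_one, Category.id_comp, Category.id_comp]
  have h1 : add (pair f (𝟙 A)) (pair g (𝟙 A)) ≫ p1 = add (rst f) (rst g) := by
    rw [CLARC.add_p1, pair_p1, pair_p1, Category.comp_id, Category.comp_id]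
  calc rst (add f g) = rst (add (pair f (𝟙 A)) (pair g (𝟙 A)) ≫ p0) := by rw [h0]
    _ = rst (add (pair f (𝟙 A)) (pair g (𝟙 A))) := jcl_rst_comp_p0 _
    _ = rst (add (pair f (𝟙 A)) (pair g (𝟙 A)) ≫ p1) := (jcl_rst_comp_p1 _).symm
    _ = rst (add (rst f) (rst g)) := by rw [h1]

lemma jcl_add_rst_one {A B : C} (g : A ⟶ B) :
    add (rst g) (𝟙 A) = add (rst g) (rst g) := by
  set H := add (pair (𝟙 A) g) (pair (𝟙 A) (zero : A ⟶ B)) with hH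
  have h0 : H ≫ p0 = add (rst g) (𝟙 A) := by
    rw [hH, CLARC.add_p0, pair_p0, pair_p0, CLARC.zero_total, Category.comp_id,
      Category.comp_id]
  have h1 : H ≫ p1 = g := by
    rw [hH, CLARC.add_p1, pair_p1, pair_p1, jcl_rst_one, Category.id_comp,
      Category.id_comp, CLARC.add_zero]
  have key : H ≫ p0 = rst (H ≫ p1) ≫ (H ≫ p0) := by
    have e := pair_p0 (H ≫ p0) (H ≫ p1)
    rw [pair_eta H] at e
    exact e
  rw [h0, h1] at key
  calc add (rst g) (𝟙 A) = rst g ≫ add (rst g) (𝟙 A) := key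
    _ = add (rst g ≫ rst g) (rst g ≫ 𝟙 A) := CLARC.comp_add _ _ _
    _ = add (rst g) (rst g) := by rw [jcl_idem, Category.comp_id]

lemma jcl_one_one_total (A : C) : rst (add (𝟙 A) (𝟙 A)) = 𝟙 A := by
  set X := add (pair (𝟙 A) (zero : A ⟶ A)) (pair (zero : A ⟶ A) (𝟙 A)) with hX
  have hx : X ≫ p0 = 𝟙 A := by
    rw [hX, CLARC.add_p0, pair_p0, pair_p0, CLARC.zero_total, jcl_rst_one,
      Category.id_comp, Category.id_comp, CLARC.add_zero]
  have h1 : rst X = 𝟙 A := by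
    rw [← jcl_rst_comp_p0 X, hx, jcl_rst_one]
  have h2 := jcl_rst_add_rst (pair (𝟙 A) (zero : A ⟶ A)) (pair (zero : A ⟶ A) (𝟙 A))
  rw [jcl_rst_pair, jcl_rst_pair, CLARC.zero_total, jcl_rst_one, Category.id_comp] at h2
  rw [← hX] at h2
  rw [← h2]
  exact h1

lemma jcl_rst_add_self {A B : C} (y : A ⟶ B) : rst (add y y) = rst y := by
  have h : add y y = y ≫ add (𝟙 B) (𝟙 B) := by
    rw [CLARC.comp_add, Category.comp_id]
  rw [h, ← jcl_rst_comp_rst', jcl_one_one_total, Category.comp_id]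

lemma jcl_rst_add_one {A B : C} (g : A ⟶ B) :
    rst (add (rst g) (𝟙 A)) = rst g := by
  rw [jcl_add_rst_one, jcl_rst_add_self, jcl_rst_rst_self]

lemma jcl_lemB {A B B' : C} (f : A ⟶ B) (g : A ⟶ B') :
    rst (add (rst f) (rst f ≫ rst g)) = rst f ≫ rst g := by
  have h : add (rst f) (rst f ≫ rst g) = rst f ≫ add (𝟙 A) (rst g) := by
    rw [CLARC.comp_add, Category.comp_id]
  rw [h, rst_rst, CLARC.add_comm, jcl_rst_add_one]

lemma jcl_sigma_absorb {A B B' : C} (f : A ⟶ B) (g : A ⟶ B') :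
    rst f ≫ rst (add (rst f) (rst g)) = rst f ≫ rst g := by
  have h2 : rst f ≫ add (rst f) (rst g) = add (rst f) (rst f ≫ rst g) := by
    rw [CLARC.comp_add, jcl_idem]
  rw [rst_slide (rst f) (add (rst f) (rst g)), h2, jcl_lemB]
  calc (rst f ≫ rst g) ≫ rst f = rst f ≫ rst g ≫ rst f := Category.assoc _ _ _
    _ = rst f ≫ rst f ≫ rst g := by rw [rst_comm]
    _ = rst f ≫ rst g := jcl_dup f (rst g)

lemma jcl_rst_add {A B : C} (f g : A ⟶ B) : rst (add f g) = rst f ≫ rst g := by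
  have hfg : rst (add (rst f) (rst g)) ≫ rst f = rst f ≫ rst g := by
    rw [rst_comm, jcl_sigma_absorb]
  have hgf : rst (add (rst f) (rst g)) ≫ rst g = rst f ≫ rst g := by
    rw [rst_comm, CLARC.add_comm, jcl_sigma_absorb, rst_comm]
  have hX : add (rst f) (rst g) = add (rst f ≫ rst g) (rst f ≫ rst g) := by
    conv_lhs => rw [← rst_comp (add (rst f) (rst g))]
    rw [CLARC.comp_add, hfg, hgf]
  calc rst (add f g) = rst (add (rst f) (rst g)) := jcl_rst_add_rst f g
    _ = rst (add (rst f ≫ rst g) (rst f ≫ rst g)) := by rw [hX]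
    _ = rst (rst f ≫ rst g) := jcl_rst_add_self _
    _ = rst f ≫ rst g := by rw [rst_rst, jcl_rst_rst_self]

lemma jcl_add_mix {A B : C} (f g : A ⟶ B) :
    add f g = add (rst g ≫ f) (rst f ≫ g) := by
  conv_lhs => rw [← rst_comp (add f g)]
  rw [jcl_rst_add, Category.assoc, CLARC.comp_add, CLARC.comp_add,
    jcl_swap f g f, rst_comp f, rst_comp g]

lemma jcl_add_mono {A B : C} {f f' g g' : A ⟶ B} (h1 : rle f f') (h2 : rle g g') :
    rle (add f g) (add f' g') := by
  show rst (add f g) ≫ add f' g' = add f g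
  have h1' : rst f ≫ f' = f := h1
  have h2' : rst g ≫ g' = g := h2
  rw [jcl_rst_add, Category.assoc, CLARC.comp_add, CLARC.comp_add, h2',
    jcl_swap f g f', h1', ← jcl_add_mix]

lemma jcl_pair_sigma {A B : C} (f g : A ⟶ B) :
    pair f g ≫ add p0 p1 = add f g := by
  rw [CLARC.comp_add, pair_p0, pair_p1, ← jcl_add_mix]

end AuxAdd
section AuxJoin

variable {C : Type u} [Category.{v} C] [JoinCLARC C]

lemma jcl_rle_join {A B : C} {S : Set (A ⟶ B)} (hS : Compat S) {f : A ⟶ B}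
    (hf : f ∈ S) : rle f (join S) :=
  join_le S hS f hf

lemma jcl_join_le_of {A B : C} {S : Set (A ⟶ B)} {g : A ⟶ B} (hS : Compat S)
    (hb : ∀ f ∈ S, rle f g) : rle (join S) g :=
  join_min S g hS hb

lemma jcl_join_of_max {A B : C} {S : Set (A ⟶ B)} {b : A ⟶ B} (hS : Compat S)
    (hb : b ∈ S) (hmax : ∀ f ∈ S, rle f b) : join S = b :=
  jcl_rle_antisymm (jcl_join_le_of hS hmax) (jcl_rle_join hS hb)

lemma jcl_compat_mono {A B : C} {S T : Set (A ⟶ B)} (hsub : S ⊆ T)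
    (hT : Compat T) : Compat S :=
  fun f hf g hg => hT f (hsub hf) g (hsub hg)

lemma jcl_compat_rsts {A B : C} (S : Set (A ⟶ B)) :
    Compat ((fun f => rst f) '' S) := by
  rintro x ⟨v, hv, rfl⟩ y ⟨w, hw, rfl⟩
  rw [jcl_rst_rst_self, jcl_rst_rst_self]
  exact rst_comm v w

lemma jcl_rst_join {A B : C} {S : Set (A ⟶ B)} (hS : Compat S) :
    rst (join S) = join ((fun f => rst f) '' S) := by
  have crS : Compat ((fun f : A ⟶ B => rst f) '' S) := jcl_compat_rsts S
  have step1 : ∀ v ∈ S, join ((fun f : A ⟶ B => rst f) '' S) ≫ rst v = rst v := by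
    intro v hv
    rw [join_comp _ (rst v) crS, Set.image_image]
    apply jcl_join_of_max
    · rintro x ⟨w, hw, rfl⟩ y ⟨w', hw', rfl⟩
      have e1 : rst w ≫ rst v = rst (rst w ≫ v) := (rst_rst v w).symm
      have e2 : rst w' ≫ rst v = rst (rst w' ≫ v) := (rst_rst v w').symm
      show rst (rst w ≫ rst v) ≫ (rst w' ≫ rst v)
          = rst (rst w' ≫ rst v) ≫ (rst w ≫ rst v)
      rw [e1, e2, jcl_rst_rst_self, jcl_rst_rst_self]
      exact rst_comm _ _
    · exact ⟨v, hv, jcl_idem v⟩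
    · rintro x ⟨w, hw, rfl⟩
      show rst (rst w ≫ rst v) ≫ rst v = rst w ≫ rst v
      rw [rst_rst, jcl_rst_rst_self, Category.assoc, jcl_idem]
  have step2 : ∀ v ∈ S, join ((fun f : A ⟶ B => rst f) '' S) ≫ v = v := by
    intro v hv
    conv_lhs => rw [← rst_comp v]
    rw [← Category.assoc, step1 v hv, rst_comp]
  have step3 : join ((fun f : A ⟶ B => rst f) '' S) ≫ join S = join S := by
    rw [comp_join _ S hS]
    congr 1
    ext x
    simp only [Set.mem_image]
    constructor
    · rintro ⟨v, hv, rfl⟩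
      rw [step2 v hv]; exact hv
    · intro hx
      exact ⟨x, hx, step2 x hx⟩
  have step5 : join ((fun f : A ⟶ B => rst f) '' S) ≫ rst (join S)
      = join ((fun f : A ⟶ B => rst f) '' S) := by
    rw [join_comp _ (rst (join S)) crS, Set.image_image]
    congr 1
    apply Set.image_congr
    intro v hv
    exact jcl_rle_rst (join_le S hS v hv)
  have step4 : rst (join S) = rst (join ((fun f : A ⟶ B => rst f) '' S)) := by
    calc rst (join S) = rst (join ((fun f : A ⟶ B => rst f) '' S) ≫ join S) := by
          rw [step3]
      _ = rst (join ((fun f : A ⟶ B => rst f) '' S) ≫ rst (join S)) :=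
          (jcl_rst_comp_rst' _ _).symm
      _ = rst (join ((fun f : A ⟶ B => rst f) '' S)) := by rw [step5]
  have hb : ∀ x ∈ ((fun f : A ⟶ B => rst f) '' S), rle x (rst (join S)) := by
    rintro x ⟨v, hv, rfl⟩
    show rst (rst v) ≫ rst (join S) = rst v
    rw [jcl_rst_rst_self]
    exact jcl_rle_rst (join_le S hS v hv)
  have hmin := join_min _ (rst (join S)) crS hb
  rw [← step4, jcl_idem] at hmin
  exact hmin

end AuxJoin
section AuxPairJoin

variable {C : Type u} [Category.{v} C] [JoinCLARC C]

lemma jcl_pair_absorb_comp {A B B' : C} (u : A ⟶ B) (v v' : A ⟶ B') :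
    rst (pair u v) ≫ pair u v'
      = pair (rst u ≫ rst v ≫ rst v' ≫ u) (rst u ≫ rst v ≫ v') := by
  rw [jcl_rst_pair, Category.assoc, comp_pair, comp_pair,
    jcl_pair_mix (rst u ≫ rst v ≫ u) (rst u ≫ rst v ≫ v')]
  simp only [rst_rst]
  simp only [Category.assoc]
  rw [jcl_swap v' u (rst v ≫ u), jcl_swap v u (rst v' ≫ rst v ≫ u),
    jcl_dup u (rst v ≫ rst v' ≫ rst v ≫ u), jcl_swap v' v u,
    jcl_dup v (rst v' ≫ u)]
  rw [jcl_dup u (rst v ≫ v'), jcl_swap v u (rst v ≫ v'),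
    jcl_dup u (rst v ≫ rst v ≫ v'), jcl_dup v v']

lemma jcl_compat_pair_fam {A B B' : C} (u : A ⟶ B) {U : Set (A ⟶ B')}
    (hU : Compat U) : Compat ((fun v => pair u v) '' U) := by
  rintro x ⟨v, hv, rfl⟩ y ⟨v', hv', rfl⟩
  show rst (pair u v) ≫ pair u v' = rst (pair u v') ≫ pair u v
  rw [jcl_pair_absorb_comp, jcl_pair_absorb_comp, jcl_swap v' v u, hU v' hv' v hv]

lemma jcl_pair_join {A B B' : C} (u : A ⟶ B) {U : Set (A ⟶ B')} (hU : Compat U) :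
    pair u (join U) = join ((fun v => pair u v) '' U) := by
  have cP := jcl_compat_pair_fam u hU
  have hXp0 : join ((fun v => pair u v) '' U) ≫ p0 = rst (join U) ≫ u := by
    rw [join_comp _ (p0 : prod B B' ⟶ B) cP, Set.image_image]
    have h1 : (fun v => pair u v ≫ (p0 : prod B B' ⟶ B)) '' U
        = (fun v : A ⟶ B' => rst v ≫ u) '' U :=
      Set.image_congr (fun v _ => by rw [pair_p0])
    have h2 : (fun v : A ⟶ B' => rst v ≫ u) '' U
        = (· ≫ u) '' ((fun v : A ⟶ B' => rst v) '' U) := by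
      rw [Set.image_image]
    rw [h1, h2, ← join_comp _ u (jcl_compat_rsts U), ← jcl_rst_join hU]
  have hXp1 : join ((fun v => pair u v) '' U) ≫ p1 = rst u ≫ join U := by
    rw [join_comp _ (p1 : prod B B' ⟶ B') cP, Set.image_image]
    have h1 : (fun v => pair u v ≫ (p1 : prod B B' ⟶ B')) '' U
        = (rst u ≫ ·) '' U :=
      Set.image_congr (fun v _ => by rw [pair_p1])
    rw [h1, ← comp_join (rst u) U hU]
  calc pair u (join U) = pair (rst (join U) ≫ u) (rst u ≫ join U) := jcl_pair_mix _ _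
    _ = pair (join ((fun v => pair u v) '' U) ≫ p0)
          (join ((fun v => pair u v) '' U) ≫ p1) := by rw [hXp0, hXp1]
    _ = join ((fun v => pair u v) '' U) := pair_eta _

lemma jcl_add_join {A B : C} (u : A ⟶ B) {T : Set (A ⟶ B)} (hT : Compat T) :
    add u (join T) = join ((fun g => add u g) '' T) := by
  have cP := jcl_compat_pair_fam u hT
  rw [← jcl_pair_sigma u (join T), jcl_pair_join u hT,
    join_comp _ (add p0 p1) cP, Set.image_image]
  congr 1
  exact Set.image_congr (fun g _ => by rw [jcl_pair_sigma])

lemma jcl_side {A B : C} (f g f' g' : A ⟶ B) :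
    rst (add f g) ≫ add f' g'
      = add (rst f ≫ rst g ≫ rst g' ≫ f') (rst f ≫ rst g ≫ rst f' ≫ g') := by
  rw [CLARC.comp_add, jcl_rst_add, Category.assoc, Category.assoc,
    jcl_add_mix (rst f ≫ rst g ≫ f') (rst f ≫ rst g ≫ g')]
  simp only [rst_rst]
  simp only [Category.assoc]
  rw [jcl_swap g' f (rst g ≫ f'), jcl_swap g f (rst g' ≫ rst g ≫ f'),
    jcl_dup f (rst g ≫ rst g' ≫ rst g ≫ f'), jcl_swap g' g f',
    jcl_dup g (rst g' ≫ f')]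
  rw [jcl_swap f' f (rst g ≫ g'), jcl_swap g f (rst f' ≫ rst g ≫ g'),
    jcl_dup f (rst g ≫ rst f' ≫ rst g ≫ g'), jcl_swap f' g g',
    jcl_dup g (rst f' ≫ g')]

lemma jcl_compat_sums {A B : C} {S T : Set (A ⟶ B)} (hS : Compat S) (hT : Compat T) :
    Compat {h : A ⟶ B | ∃ f ∈ S, ∃ g ∈ T, h = add f g} := by
  rintro x ⟨f, hf, g, hg, rfl⟩ y ⟨f', hf', g', hg', rfl⟩
  have hff' : rst f ≫ f' = rst f' ≫ f := hS f hf f' hf'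
  have hgg' : rst g ≫ g' = rst g' ≫ g := hT g hg g' hg'
  rw [jcl_side f g f' g', jcl_side f' g' f g]
  rw [jcl_swap f g (rst g' ≫ f'), jcl_swap f g' f', hff',
    jcl_swap g' f' f, jcl_swap g f' (rst g' ≫ f), jcl_swap g g' f]
  rw [jcl_swap g f' g', hgg', jcl_swap f f' (rst g' ≫ g), jcl_swap f g' g]

end AuxPairJoin

/-- In a Cartesian left additive join restriction category, the
addition map `+ : Hom(A,B) × Hom(A,B) → Hom(A,B)` is monotone and preserves
joins in each argument: if `f ≤ f'` and `g ≤ g'` then `f + g ≤ f' + g'`, and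
`(⋁ᵢ fᵢ) + (⋁ⱼ gⱼ) = ⋁_{i,j} (fᵢ + gⱼ)`. -/
theorem add_dcppo_morphism {C : Type u} [Category.{v} C] [JoinCLARC C]
    (A B : C) :
    (∀ f f' g g' : A ⟶ B, rle f f' → rle g g' → rle (add f g) (add f' g')) ∧
    (∀ S T : Set (A ⟶ B), Compat S → Compat T →
      add (join S) (join T)
        = join {h : A ⟶ B | ∃ f ∈ S, ∃ g ∈ T, h = add f g}) := by
  constructor
  · intro f f' g g' h1 h2
    exact jcl_add_mono h1 h2
  · intro S T hS hT
    have hR : Compat {h : A ⟶ B | ∃ f ∈ S, ∃ g ∈ T, h = add f g} :=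
      jcl_compat_sums hS hT
    have cJ : Compat ({join S} : Set (A ⟶ B)) := by
      intro a ha b hb
      rw [Set.mem_singleton_iff] at ha hb
      subst ha; subst hb; rfl
    apply jcl_rle_antisymm
    · -- add (join S) (join T) ≤ join R
      rw [jcl_add_join (join S) hT]
      apply jcl_join_le_of
      · apply jcl_compat_mono _ (jcl_compat_sums cJ hT)
        rintro x ⟨g, hg, rfl⟩
        exact ⟨join S, rfl, g, hg, rfl⟩
      · rintro x ⟨g, hg, rfl⟩
        show rle (add (join S) g) _
        rw [CLARC.add_comm, jcl_add_join g hS]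
        apply jcl_join_le_of
        · have cg : Compat ({g} : Set (A ⟶ B)) := by
            intro a ha b hb
            rw [Set.mem_singleton_iff] at ha hb
            subst ha; subst hb; rfl
          apply jcl_compat_mono _ (jcl_compat_sums cg hS)
          rintro y ⟨f, hf, rfl⟩
          exact ⟨g, rfl, f, hf, rfl⟩
        · rintro y ⟨f, hf, rfl⟩
          have hmem : add g f ∈ {h : A ⟶ B | ∃ f ∈ S, ∃ g ∈ T, h = add f g} :=
            ⟨f, hf, g, hg, CLARC.add_comm g f⟩
          exact jcl_rle_join hR hmem
    · -- join R ≤ add (join S) (join T)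
      apply jcl_join_le_of hR
      rintro x ⟨f, hf, g, hg, rfl⟩
      exact jcl_add_mono (jcl_rle_join hS hf) (jcl_rle_join hT hg)
end
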